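/- arXiv:2508.07653 — 5 statements merged into one kernel-verified Lean document; each statement's English description precedes it below -/
import Mathlib

section
/- Suppose {a_n} is a chain sequence with parameter sequence {g_n} (i.e., a_n = g_n(1 - g_{n-1}) with 0 ≤ g_n ≤ 1), and suppose a_n → 1/4 as n → ∞. Then g_n → 1/2. -/
open Filter

theorem stmt_3 (a g : ℕ → ℝ)
    (hg : ∀ n, 0 ≤ g n ∧ g n ≤ 1)
    (hchain : ∀ n ≥ 1, a n = g n * (1 - g (n - 1)))
    (ha : Filter.Tendsto a Filter.atTop (nhds (1/4 : ℝ))) :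
    Filter.Tendsto g Filter.atTop (nhds (1/2 : ℝ)) := by
  have hbdd_le : IsBoundedUnder (· ≤ ·) atTop g :=
    isBoundedUnder_of ⟨1, fun n => (hg n).2⟩
  have hbdd_ge : IsBoundedUnder (· ≥ ·) atTop g :=
    isBoundedUnder_of ⟨0, fun n => (hg n).1⟩
  have hcob_le : IsCoboundedUnder (· ≤ ·) atTop g := hbdd_ge.isCoboundedUnder_le
  have hcob_ge : IsCoboundedUnder (· ≥ ·) atTop g := hbdd_le.isCoboundedUnder_ge
  set L := limsup g atTop with hLdef
  set l := liminf g atTop with hldef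
  have hlL : l ≤ L := liminf_le_limsup hbdd_le hbdd_ge
  have hL1 : L ≤ 1 := limsup_le_of_le hcob_le (Eventually.of_forall fun n => (hg n).2)
  have hl0 : (0:ℝ) ≤ l := le_liminf_of_le hcob_ge (Eventually.of_forall fun n => (hg n).1)
  -- liminf g ≥ 1/4 since eventually a n ≤ g n
  have hag : ∀ᶠ n in atTop, a n ≤ g n := by
    filter_upwards [eventually_ge_atTop 1] with n hn
    rw [hchain n hn]
    nlinarith [(hg n).1, (hg n).2, (hg (n-1)).1, (hg (n-1)).2]
  have hbdd_ge_a : IsBoundedUnder (· ≥ ·) atTop a := ha.isBoundedUnder_ge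
  have hl14 : (1/4:ℝ) ≤ l := by
    have := liminf_le_liminf hag hbdd_ge_a hcob_ge
    rwa [ha.liminf_eq] at this
  have hL14 : (1/4:ℝ) ≤ L := le_trans hl14 hlL
  -- generic eventual lower bound for a
  have haev : ∀ ε > (0:ℝ), ∀ᶠ n in atTop, 1/4 - ε < a n := fun ε hε =>
    ha.eventually (eventually_gt_nhds (by linarith))
  -- Step 1: L = 1/2
  have hLhalf : L = 1/2 := by
    have key : ∀ ε > (0:ℝ), (L - 1/2)^2 ≤ 2*ε := by
      intro ε hε
      have h1 : ∀ᶠ n in atTop, g n < L + ε :=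
        eventually_lt_of_limsup_lt (by linarith) hbdd_le
      obtain ⟨N1, hN1⟩ := eventually_atTop.1 h1
      obtain ⟨N2, hN2⟩ := eventually_atTop.1 (haev ε hε)
      have hub : ∀ᶠ n in atTop, g n ≤ (L + ε - (1/4 - ε)) / (L + ε) := by
        filter_upwards [eventually_ge_atTop (max N1 N2)] with n hn
        have hn1 : N1 ≤ n + 1 := le_trans (le_max_left _ _) (le_trans hn (Nat.le_succ n))
        have hn2 : N2 ≤ n + 1 := le_trans (le_max_right _ _) (le_trans hn (Nat.le_succ n))
        have hc := hchain (n+1) (Nat.le_add_left 1 n)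
        simp only [Nat.add_sub_cancel] at hc
        have h2 := hN1 (n+1) hn1
        have h3 := hN2 (n+1) hn2
        have hLε : (0:ℝ) < L + ε := by linarith
        rw [le_div_iff₀ hLε]
        nlinarith [(hg (n+1)).1, (hg (n+1)).2, (hg n).1, (hg n).2]
      have hLle : L ≤ (L + ε - (1/4 - ε)) / (L + ε) := limsup_le_of_le hcob_le hub
      have hLε : (0:ℝ) < L + ε := by linarith
      rw [le_div_iff₀ hLε] at hLle
      nlinarith
    have h0 : (L - 1/2)^2 ≤ 0 := by
      by_contra h
      push_neg at h
      have := key ((L - 1/2)^2/4) (by positivity)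
      linarith
    nlinarith [sq_nonneg (L - 1/2)]
  -- Step 2: l = 1/2
  have hlhalf : l = 1/2 := by
    have key : ∀ ε > (0:ℝ), (l - 1/2)^2 ≤ 2*ε := by
      intro ε hε
      have h1 : ∀ᶠ n in atTop, l - ε < g n :=
        eventually_lt_of_lt_liminf (by linarith) hbdd_ge
      obtain ⟨N1, hN1⟩ := eventually_atTop.1 h1
      obtain ⟨N2, hN2⟩ := eventually_atTop.1 (haev ε hε)
      have hlε : (0:ℝ) < 1 - l + ε := by
        have : l ≤ 1/2 := hLhalf ▸ hlL
        linarith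
      have hlb : ∀ᶠ n in atTop, (1/4 - ε) / (1 - l + ε) ≤ g n := by
        filter_upwards [eventually_ge_atTop (max N1 N2 + 1)] with n hn
        have hn1 : N1 ≤ n - 1 := by omega
        have hn2 : N2 ≤ n := by omega
        have hc := hchain n (by omega)
        have h2 := hN1 (n-1) hn1
        have h3 := hN2 n hn2
        rw [div_le_iff₀ hlε]
        nlinarith [(hg n).1, (hg n).2, (hg (n-1)).1, (hg (n-1)).2]
      have hlle : (1/4 - ε) / (1 - l + ε) ≤ l := le_liminf_of_le hcob_ge hlb
      rw [div_le_iff₀ hlε] at hlle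
      nlinarith [hLhalf ▸ hlL]
    have h0 : (l - 1/2)^2 ≤ 0 := by
      by_contra h
      push_neg at h
      have := key ((l - 1/2)^2/4) (by positivity)
      linarith
    nlinarith [sq_nonneg (l - 1/2)]
  exact tendsto_of_liminf_eq_limsup hlhalf hLhalf hbdd_le hbdd_ge
end

section
/- Let a_n = (1/4)(1 + (-1)^n ε_n) with ε_n ≥ 0. Suppose there exists a sequence of positive reals {c_n} satisfying c_{n+1} ≤ 2 c_n and ∑_{m=n}^{∞} (-1)^{m-n} c_m ε_m = (-1)^n (c_{n+1} - c_n) for all n (series convergent). Then {a_n} is a chain sequence: defining δ_{n-1} = (1/c_n) ∑_{m=n}^∞ (-1)^{m-n} c_m ε_m and h_n = (1/2)(1 + (-1)^n δ_n), one has 0 ≤ h_n ≤ 1 and a_n = h_n(1 - h_{n-1}). -/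
theorem stmt_7 (a ε c δ h : ℕ → ℝ)
    (hε0 : ∀ n, 0 ≤ ε n)
    (ha : ∀ n, a n = (1/4) * (1 + (-1)^n * ε n))
    (hc : ∀ n ≥ 1, 0 < c n)
    (hc2 : ∀ n ≥ 1, c (n + 1) ≤ 2 * c n)
    (hsum : ∀ n ≥ 1, HasSum (fun k : ℕ => (-1 : ℝ)^k * c (n + k) * ε (n + k))
      ((-1)^n * (c (n + 1) - c n)))
    (hδ : ∀ n, δ n = (1 / c (n + 1)) *
      ∑' k : ℕ, (-1 : ℝ)^k * c (n + 1 + k) * ε (n + 1 + k))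
    (hh : ∀ n, h n = (1/2) * (1 + (-1)^n * δ n)) :
    (∀ n, 0 ≤ h n ∧ h n ≤ 1) ∧ ∀ n ≥ 1, a n = h n * (1 - h (n - 1)) := by
  -- closed form for δ
  have hδ' : ∀ n, δ n = (1 / c (n + 1)) * ((-1)^(n+1) * (c (n + 2) - c (n + 1))) := by
    intro n
    rw [hδ n, (hsum (n+1) (by omega)).tsum_eq]
  -- closed form for h
  have hh' : ∀ n, h n = 1 - c (n + 2) / (2 * c (n + 1)) := by
    intro n
    have hcp : c (n+1) ≠ 0 := (hc (n+1) (by omega)).ne'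
    rw [hh n, hδ' n]
    rcases Nat.even_or_odd n with he | ho
    · rw [he.neg_one_pow, (he.add_one).neg_one_pow]
      field_simp
      ring
    · rw [ho.neg_one_pow, (ho.add_one).neg_one_pow]
      field_simp
      ring
  -- key ε identity for n ≥ 1
  have hkey : ∀ n ≥ 1, c n * ε n = (-1)^n * (2 * c (n+1) - c n - c (n+2)) := by
    intro n hn
    have h1 := hsum n hn
    have h2 := (hsum (n+1) (by omega)).neg
    have h3 : HasSum (fun k : ℕ => (-1:ℝ)^(k+1) * c (n + (k+1)) * ε (n + (k+1)))
        (-((-1)^(n+1) * (c (n + 2) - c (n + 1)))) := by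
      have heq : (fun k : ℕ => (-1:ℝ)^(k+1) * c (n + (k+1)) * ε (n + (k+1)))
          = fun k : ℕ => -((-1:ℝ)^k * c (n + 1 + k) * ε (n + 1 + k)) := by
        funext k
        rw [show n + (k+1) = n + 1 + k by omega]
        ring
      rw [heq]
      exact h2
    have h4 := (hasSum_nat_add_iff (f := fun k : ℕ => (-1:ℝ)^k * c (n + k) * ε (n + k)) 1).mp h3
    simp [Finset.range_one] at h4
    have := h1.unique h4
    rcases Nat.even_or_odd n with he | ho
    · rw [he.neg_one_pow] at this ⊢
      rw [(he.add_one).neg_one_pow] at this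
      linarith
    · rw [ho.neg_one_pow] at this ⊢
      rw [(ho.add_one).neg_one_pow] at this
      linarith
  constructor
  · intro n
    have hcp1 := hc (n+1) (by omega)
    have hcp2 := hc (n+2) (by omega)
    have hle := hc2 (n+1) (by omega)
    have hd1 : c (n+2) / (2 * c (n+1)) ≤ 1 := by
      rw [div_le_one (by positivity)]
      linarith
    have hd0 : 0 ≤ c (n+2) / (2 * c (n+1)) := by positivity
    rw [hh' n]
    constructor <;> linarith
  · intro n hn
    obtain ⟨m, rfl⟩ : ∃ m, n = m + 1 := ⟨n - 1, by omega⟩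
    have hcp0 := hc (m+1) (by omega)
    have hcp1 := hc (m+2) (by omega)
    have hk := hkey (m+1) (by omega)
    rw [ha, hh' (m+1), show m + 1 - 1 = m from rfl, hh' m]
    rcases Nat.even_or_odd (m+1) with he | ho
    · rw [he.neg_one_pow] at hk ⊢
      field_simp
      nlinarith [hk]
    · rw [ho.neg_one_pow] at hk ⊢
      field_simp
      nlinarith [hk]
end

section
/- Let p, q > 0 and define a_{2k-1} = 1/4 - p, a_{2k} = 1/4 + q for all k ≥ 1. Suppose there exist ε, γ ∈ (0,1) with ε < γ such that ε ≤ 1/4 - p ≤ γ(1-γ) and ε ≤ 1/4 + q ≤ γ - (γ/(1-γ))(1/4 - p). Then {a_n} is a chain sequence. -/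
theorem stmt_9 (a : ℕ → ℝ) (p q : ℝ) (hp : 0 < p) (hq : 0 < q)
    (ha1 : ∀ k ≥ 1, a (2 * k - 1) = 1/4 - p)
    (ha2 : ∀ k ≥ 1, a (2 * k) = 1/4 + q)
    (ε γ : ℝ) (hε : ε ∈ Set.Ioo (0:ℝ) 1) (hγ : γ ∈ Set.Ioo (0:ℝ) 1)
    (hεγ : ε < γ)
    (h1 : ε ≤ 1/4 - p) (h2 : 1/4 - p ≤ γ * (1 - γ))
    (h3 : ε ≤ 1/4 + q) (h4 : 1/4 + q ≤ γ - (γ / (1 - γ)) * (1/4 - p)) :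
    ∃ g : ℕ → ℝ, (∀ n, 0 ≤ g n ∧ g n ≤ 1) ∧
      ∀ n ≥ 1, a n = g n * (1 - g (n - 1)) := by
  obtain ⟨hε0, hε1⟩ := hε
  obtain ⟨hγ0, hγ1⟩ := hγ
  have h1γ : (0:ℝ) < 1 - γ := by linarith
  have hap : (0:ℝ) < 1/4 - p := lt_of_lt_of_le hε0 h1
  have haq : (0:ℝ) < 1/4 + q := lt_of_lt_of_le hε0 h3
  have haodd : ∀ k : ℕ, a (2 * k + 1) = 1/4 - p := by
    intro k
    have := ha1 (k + 1) (by omega)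
    rwa [show 2 * (k + 1) - 1 = 2 * k + 1 from by omega] at this
  have haeven : ∀ k : ℕ, a (2 * k + 1 + 1) = 1/4 + q := by
    intro k
    have := ha2 (k + 1) (by omega)
    rwa [show 2 * (k + 1) = 2 * k + 1 + 1 from by omega] at this
  set B : ℝ := (1/4 - p) / (1 - γ) with hB
  have hB0 : 0 ≤ B := le_of_lt (div_pos hap h1γ)
  have hBγ : B ≤ γ := by
    rw [hB, div_le_iff₀ h1γ]; nlinarith
  have hγB : γ * B = (γ / (1 - γ)) * (1/4 - p) := by
    rw [hB]; ring
  -- define g recursively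
  set g : ℕ → ℝ := fun n => Nat.rec (motive := fun _ => ℝ) 0
    (fun m gm => a (m + 1) / (1 - gm)) n with hg
  have hgsucc : ∀ n, g (n + 1) = a (n + 1) / (1 - g n) := fun n => rfl
  have hg0 : g 0 = 0 := rfl
  -- key invariant
  have key : ∀ k : ℕ, (0 ≤ g (2 * k) ∧ g (2 * k) ≤ γ) ∧
      (0 ≤ g (2 * k + 1) ∧ g (2 * k + 1) ≤ B) := by
    intro k
    induction k with
    | zero =>
      have ho : g (2 * 0 + 1) = (1/4 - p) / (1 - g 0) := by
        have h := hgsucc 0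
        rw [show (0:ℕ) + 1 = 2 * 0 + 1 from rfl] at h
        rw [h, haodd 0]
      refine ⟨⟨by rw [show 2 * 0 = 0 from rfl, hg0], by rw [show 2*0 = 0 from rfl, hg0]; exact le_of_lt hγ0⟩, ?_, ?_⟩
      · rw [ho, hg0]; positivity
      · rw [ho, hg0, hB]
        have : (1/4 - p) / (1 - (0:ℝ)) = 1/4 - p := by norm_num
        rw [this, le_div_iff₀ h1γ]
        nlinarith
    | succ n ih =>
      obtain ⟨⟨_, _⟩, ⟨hodd0, hoddB⟩⟩ := ih
      have hoddγ : g (2 * n + 1) ≤ γ := hoddB.trans hBγ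
      have hpos : (0:ℝ) < 1 - g (2 * n + 1) := by linarith
      have heven : g (2 * (n + 1)) = (1/4 + q) / (1 - g (2 * n + 1)) := by
        have h := hgsucc (2 * n + 1)
        rw [show 2 * n + 1 + 1 = 2 * (n + 1) from by ring] at h
        rw [h, show 2 * (n+1) = 2*n+1+1 from by ring, haeven n]
      have hev0 : 0 ≤ g (2 * (n + 1)) := by
        rw [heven]; positivity
      have hevγ : g (2 * (n + 1)) ≤ γ := by
        rw [heven, div_le_iff₀ hpos]
        have e1 : γ * (1 - B) ≤ γ * (1 - g (2 * n + 1)) :=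
          mul_le_mul_of_nonneg_left (by linarith) (le_of_lt hγ0)
        calc 1/4 + q ≤ γ - (γ / (1 - γ)) * (1/4 - p) := h4
          _ = γ * (1 - B) := by rw [← hγB]; ring
          _ ≤ γ * (1 - g (2 * n + 1)) := e1
      have hposev : (0:ℝ) < 1 - g (2 * (n + 1)) := by linarith
      have hodd : g (2 * (n + 1) + 1) = (1/4 - p) / (1 - g (2 * (n + 1))) := by
        rw [hgsucc, show 2 * (n+1) + 1 = 2 * (n+1) + 1 from rfl, haodd (n+1)]
      refine ⟨⟨hev0, hevγ⟩, ?_, ?_⟩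
      · rw [hodd]; positivity
      · rw [hodd, hB]
        apply div_le_div_of_nonneg_left (le_of_lt hap) h1γ
        linarith
  have inv : ∀ n, 0 ≤ g n ∧ g n ≤ γ := by
    intro n
    rcases Nat.even_or_odd n with ⟨k, hk⟩ | ⟨k, hk⟩
    · subst hk; simpa [two_mul] using (key k).1
    · subst hk; exact ⟨(key k).2.1, (key k).2.2.trans hBγ⟩
  refine ⟨g, fun n => ⟨(inv n).1, (inv n).2.trans (le_of_lt hγ1)⟩, ?_⟩
  intro n hn
  obtain ⟨m, rfl⟩ : ∃ m, n = m + 1 := ⟨n - 1, by omega⟩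
  have hne : 1 - g m ≠ 0 := by
    have := (inv m).2; intro h; nlinarith
  rw [Nat.add_sub_cancel, hgsucc m, div_mul_cancel₀ _ hne]
end

section
/- Define a_n = 1/4 + (-1)^n / (4(4n² - 1)) and g_n = (2n² - 1/4 + (-1)^n/4)/(2n+1)². Then g_n(1 - g_{n-1}) = a_n for all n ≥ 1, and 0 ≤ g_n ≤ 1 for all n ≥ 0; hence {a_n} is a chain sequence. -/
/-!
Write `s = (-1)^(n-1)`, so that `(-1)^n = -s` and `s² = 1`. After clearing the denominators
`(2n-1)²`, `(2n+1)²` and `4(4n²-1) = 4(2n-1)(2n+1)`, the identity `g_n (1 - g_{n-1}) = a_n` becomes a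
polynomial identity in `n` and `s` modulo `s² = 1`. The bounds `0 ≤ g_n ≤ 1` only use `|(-1)^n| = 1`:
the numerator is at most `2n² ≤ (2n+1)²`, and it is nonnegative because it vanishes at `n = 0` and
exceeds `2n² - 1/2 > 0` for `n ≥ 1`.
-/

theorem chain_identity (x s : ℝ) (hs : s ^ 2 = 1) (hx : 2 * x + 1 ≠ 0)
    (hx' : 2 * (x + 1) + 1 ≠ 0) :
    (2 * (x + 1) ^ 2 - 1/4 + -s / 4) / (2 * (x + 1) + 1) ^ 2 *
        (1 - (2 * x ^ 2 - 1/4 + s / 4) / (2 * x + 1) ^ 2) =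
      1/4 + -s / (4 * (4 * (x + 1) ^ 2 - 1)) := by
  rw [show 4 * (x + 1) ^ 2 - 1 = (2 * x + 1) * (2 * (x + 1) + 1) by ring]
  field_simp
  linear_combination hs

theorem two_mul_sq_sub_add_le_sq (x s : ℝ) (hx : 0 ≤ x) (hs : s ≤ 1) :
    2 * x ^ 2 - 1/4 + s / 4 ≤ (2 * x + 1) ^ 2 := by
  nlinarith

theorem two_mul_sq_sub_add_neg_one_pow_nonneg (n : ℕ) :
    0 ≤ 2 * (n : ℝ) ^ 2 - 1/4 + (-1 : ℝ) ^ n / 4 := by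
  rcases Nat.eq_zero_or_pos n with rfl | hn
  · norm_num
  · have h₁ : (1 : ℝ) ≤ n := by exact_mod_cast hn
    have h₂ : -1 ≤ (-1 : ℝ) ^ n := (abs_le.mp (abs_neg_one_pow n).le).1
    nlinarith

theorem stmt_11 (a g : ℕ → ℝ)
    (ha : ∀ n, a n = 1/4 + (-1 : ℝ)^n / (4 * (4 * (n : ℝ)^2 - 1)))
    (hg : ∀ n, g n = (2 * (n : ℝ)^2 - 1/4 + (-1 : ℝ)^n / 4) / (2 * (n : ℝ) + 1)^2) :
    (∀ n ≥ 1, g n * (1 - g (n - 1)) = a n) ∧ ∀ n, 0 ≤ g n ∧ g n ≤ 1 := by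
  refine ⟨fun n hn => ?_, fun n => ⟨?_, ?_⟩⟩
  · obtain ⟨m, rfl⟩ := Nat.exists_eq_add_of_le' hn
    rw [ha, hg, hg, Nat.add_sub_cancel, pow_succ (-1 : ℝ) m, mul_neg_one]
    push_cast
    exact chain_identity _ _ (by rw [← pow_mul, mul_comm, pow_mul, neg_one_sq, one_pow])
      (by positivity) (by positivity)
  · rw [hg]
    exact div_nonneg (two_mul_sq_sub_add_neg_one_pow_nonneg n) (by positivity)
  · rw [hg, div_le_one (by positivity)]
    exact two_mul_sq_sub_add_le_sq _ _ n.cast_nonneg (abs_le.mp (abs_neg_one_pow n).le).2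
end

section
/- Suppose δ_n ≥ 0 satisfies δ_{n+1} ≤ δ_n/(1 + 2δ_n) + e_n with e_n → 0. Then δ_n → 0; in particular limsup δ_n = 0. -/
/-!
Write `φ x = x / (1 + 2x)`. Fix `ε > 0` and let `c = (ε - φ ε) / 2 > 0`; eventually `e n < c`.
Since `φ` and the gap `x - φ x` are both monotone on `[0, ∞)`, from then on a term `≤ ε` is
followed by a term `≤ φ ε + c < ε`, while a term `> ε` is followed by one at least `c` smaller.
As `δ ≥ 0`, the sequence cannot keep dropping by `c`, so it enters `[0, ε]` and stays there.
-/

open Filter Topology Set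

theorem eventually_le_of_descent {u : ℕ → ℝ} {ε c : ℝ} (hc : 0 < c) (hu : ∀ n, 0 ≤ u n)
    (hstay : ∀ᶠ n in atTop, u n ≤ ε → u (n + 1) ≤ ε)
    (hdesc : ∀ᶠ n in atTop, ε < u n → u (n + 1) ≤ u n - c) :
    ∀ᶠ n in atTop, u n ≤ ε := by
  obtain ⟨N, hN⟩ := eventually_atTop.1 (hstay.and hdesc)
  have hentry : ∃ m ≥ N, u m ≤ ε := by
    by_contra! hbig
    have hdrop : ∀ k : ℕ, u (N + k) ≤ u N - k * c := by
      intro k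
      induction k with
      | zero => simp
      | succ k ih =>
        have := (hN (N + k) (Nat.le_add_right N k)).2 (hbig _ (Nat.le_add_right N k))
        rw [← add_assoc]
        push_cast
        linarith
    obtain ⟨k, hk⟩ := exists_nat_gt (u N / c)
    rw [div_lt_iff₀ hc] at hk
    linarith [hdrop k, hu (N + k)]
  obtain ⟨m, hmN, hm⟩ := hentry
  refine eventually_atTop.2 ⟨m, fun n hn => ?_⟩
  induction n, hn using Nat.le_induction with
  | base => exact hm
  | succ n hmn ih => exact (hN n (hmN.trans hmn)).1 ih

theorem tendsto_zero_of_le_map_add {φ : ℝ → ℝ} {δ e : ℕ → ℝ}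
    (hφ : MonotoneOn φ (Ici 0)) (hgap : MonotoneOn (fun x => x - φ x) (Ici 0))
    (hlt : ∀ x, 0 < x → φ x < x) (hδ0 : ∀ n, 0 ≤ δ n)
    (hrec : ∀ n, δ (n + 1) ≤ φ (δ n) + e n) (he : Tendsto e atTop (𝓝 0)) :
    Tendsto δ atTop (𝓝 0) := by
  refine tendsto_order.2 ⟨fun a ha => .of_forall fun n => ha.trans_le (hδ0 n), fun a ha => ?_⟩
  set ε := a / 2
  have hε : 0 < ε := half_pos ha
  set c := (ε - φ ε) / 2 with hc_def
  have hc : 0 < c := half_pos (sub_pos.2 (hlt ε hε))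
  have hec : ∀ᶠ n in atTop, e n < c := he.eventually (gt_mem_nhds hc)
  have hstay : ∀ᶠ n in atTop, δ n ≤ ε → δ (n + 1) ≤ ε := hec.mono fun n hn hδn => by
    linarith [hrec n, hφ (hδ0 n) hε.le hδn, hlt ε hε]
  have hdesc : ∀ᶠ n in atTop, ε < δ n → δ (n + 1) ≤ δ n - c := hec.mono fun n hn hδn => by
    have hgap_n : ε - φ ε ≤ δ n - φ (δ n) := hgap (show ε ∈ Ici 0 from hε.le) (hδ0 n) hδn.le
    linarith [hrec n]
  exact (eventually_le_of_descent hc hδ0 hstay hdesc).mono fun n hn => hn.trans_lt (half_lt_self ha)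

theorem monotoneOn_div_one_add_two_mul : MonotoneOn (fun x : ℝ => x / (1 + 2 * x)) (Ici 0) := by
  intro x hx y hy hxy
  simp only [mem_Ici] at hx hy
  rw [div_le_div_iff₀ (by positivity) (by positivity)]
  linarith

theorem monotoneOn_sub_div_one_add_two_mul :
    MonotoneOn (fun x : ℝ => x - x / (1 + 2 * x)) (Ici 0) := by
  intro x hx y hy hxy
  simp only [mem_Ici] at hx hy
  have hgap_eq : ∀ t : ℝ, 0 ≤ t → t - t / (1 + 2 * t) = 2 * t ^ 2 / (1 + 2 * t) := fun t ht => by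
    field_simp
    ring
  simp only [hgap_eq x hx, hgap_eq y hy]
  rw [div_le_div_iff₀ (by positivity) (by positivity)]
  nlinarith [mul_nonneg (sub_nonneg.2 hxy) (by positivity : 0 ≤ x + y + 2 * x * y)]

theorem div_one_add_two_mul_lt_self {x : ℝ} (hx : 0 < x) : x / (1 + 2 * x) < x := by
  rw [div_lt_iff₀ (by positivity)]
  nlinarith

theorem stmt_15 (δ e : ℕ → ℝ)
    (hδ0 : ∀ n, 0 ≤ δ n)
    (hrec : ∀ n, δ (n + 1) ≤ δ n / (1 + 2 * δ n) + e n)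
    (he : Filter.Tendsto e Filter.atTop (nhds 0)) :
    Filter.Tendsto δ Filter.atTop (nhds 0) :=
  tendsto_zero_of_le_map_add monotoneOn_div_one_add_two_mul
    monotoneOn_sub_div_one_add_two_mul (fun _ => div_one_add_two_mul_lt_self) hδ0 hrec he
end
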